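/- arXiv:1012.3553 — 5 statements merged into one kernel-verified Lean document; each statement's English description precedes it below -/
import Mathlib

section
/- Let n = m·d with m ≥ 2 and q^d ≡ 1 (mod 4), and view GL_m(q^d) ≤ GL_n(q) by restriction of scalars. Then there exists y ∈ GL_m(q^d) of order 4 whose image in PGL_n(q) = GL_n(q)/Z(GL_n(q)) also has order 4. If moreover m ≥ 3, such a y can be chosen in SL_n(q). -/
/-!
Since `Kˣ` is cyclic of order `|K| - 1 ≡ 0 (mod 4)`, it contains an element `ζ` of order 4.
In a `K`-basis take `y = diag(ζ, 1, …, 1)`, or `y = diag(ζ, ζ⁻¹, 1, …, 1)` when `m ≥ 3`.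
Then `y⁴ = 1`, and `y²` fixes one basis vector but not another, so it does not commute with
the swap of these two vectors: `y²` is not central even among `F`-linear automorphisms.
The `F`-determinant is the norm of the `K`-determinant, which is `1` for the second choice.
-/

theorem IsCyclic.exists_orderOf_eq {G : Type*} [Group G] [IsCyclic G] [Fintype G] {d : ℕ}
    (hd : d ∣ Fintype.card G) : ∃ g : G, orderOf g = d := by
  classical
  have hpos : 0 < (Finset.univ.filter fun g : G => orderOf g = d).card := by
    rw [IsCyclic.card_orderOf_eq_totient hd]
    exact Nat.totient_pos.mpr (Nat.pos_of_dvd_of_pos hd Fintype.card_pos)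
  obtain ⟨g, hg⟩ := Finset.card_pos.mp hpos
  exact ⟨g, (Finset.mem_filter.mp hg).2⟩

theorem orderOf_eq_four {M : Type*} [Monoid M] {x : M} (h4 : x ^ 4 = 1) (h2 : x ^ 2 ≠ 1) :
    orderOf x = 4 :=
  orderOf_eq_prime_pow (p := 2) (n := 1) h2 h4

theorem QuotientGroup.orderOf_mk_eq_four {G : Type*} [Group G] {N : Subgroup G} [N.Normal]
    {x : G} (h4 : x ^ 4 = 1) (h2 : x ^ 2 ∉ N) : orderOf (x : G ⧸ N) = 4 :=
  orderOf_eq_four (by rw [← mk_pow, h4, mk_one]) (by rwa [← mk_pow, Ne, eq_one_iff])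

namespace LinearEquiv

variable (R : Type*) {S M : Type*} [CommSemiring R] [Semiring S] [Algebra R S]
  [AddCommMonoid M] [Module R M] [Module S M] [IsScalarTower R S M]

def restrictScalarsHom : (M ≃ₗ[S] M) →* (M ≃ₗ[R] M) where
  toFun := restrictScalars R
  map_one' := rfl
  map_mul' _ _ := rfl

end LinearEquiv

namespace Module.Basis

variable {ι R M : Type*} [CommRing R] [AddCommGroup M] [Module R M]

noncomputable def diagonalAut (b : Basis ι R M) : (ι → Rˣ) →* (M ≃ₗ[R] M) where
  toFun c := b.equiv (b.unitsSMul c) (Equiv.refl ι)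
  map_one' := b.ext' fun i => by simp [unitsSMul_apply]
  map_mul' c d := b.ext' fun i => by simp [unitsSMul_apply, Units.smul_def, smul_smul, mul_comm]

@[simp]
theorem diagonalAut_apply_self (b : Basis ι R M) (c : ι → Rˣ) (i : ι) :
    b.diagonalAut c (b i) = c i • b i := by
  simp [diagonalAut, unitsSMul_apply]

theorem det_diagonalAut [Fintype ι] [DecidableEq ι] (b : Basis ι R M) (c : ι → Rˣ) :
    LinearMap.det (b.diagonalAut c : M →ₗ[R] M) = ∏ i, (c i : R) := by
  rw [← LinearMap.det_toMatrix b, ← Matrix.det_diagonal]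
  congr 1
  ext i j
  rw [LinearMap.toMatrix_apply, LinearEquiv.coe_coe, diagonalAut_apply_self, Units.smul_def,
    map_smul, b.repr_self, Matrix.diagonal_apply, Finsupp.smul_apply, Finsupp.single_apply]
  split_ifs with h₁ h₂ h₂ <;> simp_all [eq_comm]

variable {F K V : Type*} [Field F] [Field K] [Algebra F K] [AddCommGroup V] [Module F V]
  [Module K V] [IsScalarTower F K V]

theorem restrictScalars_notMem_center (b : Basis ι K V) {f : V ≃ₗ[K] V} {i j : ι}
    (hi : f (b i) = b i) (hj : f (b j) ≠ b j) :
    f.restrictScalars F ∉ Subgroup.center (V ≃ₗ[F] V) := by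
  classical
  intro hf
  have hcomm := Subgroup.mem_center_iff.mp hf ((b.equiv b (Equiv.swap i j)).restrictScalars F)
  have := congr($hcomm (b i))
  simp only [LinearEquiv.mul_apply, LinearEquiv.restrictScalars_apply, equiv_apply, hi,
    Equiv.swap_apply_left] at this
  exact hj this.symm

theorem orderOf_diagonalAut_eq_four (b : Basis ι K V) {c : ι → Kˣ} {i j : ι}
    (hc : c ^ 4 = 1) (hi : c i = 1) (hj : c j ^ 2 ≠ 1) :
    orderOf (b.diagonalAut c) = 4 ∧
      orderOf (QuotientGroup.mk ((b.diagonalAut c).restrictScalars F) :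
        (V ≃ₗ[F] V) ⧸ Subgroup.center (V ≃ₗ[F] V)) = 4 := by
  set y := b.diagonalAut c
  have hpow (n : ℕ) : y.restrictScalars F ^ n = (y ^ n).restrictScalars F :=
    (map_pow (LinearEquiv.restrictScalarsHom F) y n).symm
  have hsq_i : (y ^ 2) (b i) = b i := by simp [y, ← map_pow, hi]
  have hsq_j : (y ^ 2) (b j) ≠ b j := by
    rw [← map_pow, diagonalAut_apply_self, Pi.pow_apply, Units.smul_def]
    exact fun h => hj <| Units.ext <|
      smul_left_injective K (b.ne_zero j) (h.trans (one_smul K _).symm)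
  have h4 : y ^ 4 = 1 := by rw [← map_pow, hc, map_one]
  refine ⟨orderOf_eq_four h4 fun h => hsq_j (by rw [h]; rfl), ?_⟩
  refine QuotientGroup.orderOf_mk_eq_four ?_ ?_
  · rw [hpow, h4]
    rfl
  · rw [hpow]
    exact restrictScalars_notMem_center b hsq_i hsq_j

theorem det_restrictScalars_diagonalAut [Fintype ι] (b : Basis ι K V) {c : ι → Kˣ}
    (hc : ∏ i, c i = 1) :
    LinearMap.det ((b.diagonalAut c).restrictScalars F : V →ₗ[F] V) = 1 := by
  classical
  rw [LinearEquiv.restrictScalars_toLinearMap, LinearMap.det_restrictScalars, det_diagonalAut,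
    ← Units.coe_prod, hc, Units.val_one, map_one]

end Module.Basis

theorem stmt7_general (F K : Type*) [Field F] [Field K] [Fintype K] [Algebra F K]
    (V : Type*) [AddCommGroup V] [Module F V] [Module K V] [IsScalarTower F K V]
    [FiniteDimensional K V]
    (hm : 2 ≤ Module.finrank K V) (hq : Fintype.card K % 4 = 1) :
    (∃ y : V ≃ₗ[K] V, orderOf y = 4 ∧
      orderOf (QuotientGroup.mk (y.restrictScalars F) :
        (V ≃ₗ[F] V) ⧸ Subgroup.center (V ≃ₗ[F] V)) = 4) ∧
    (3 ≤ Module.finrank K V → ∃ y : V ≃ₗ[K] V, orderOf y = 4 ∧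
      orderOf (QuotientGroup.mk (y.restrictScalars F) :
        (V ≃ₗ[F] V) ⧸ Subgroup.center (V ≃ₗ[F] V)) = 4 ∧
      LinearMap.det ((y.restrictScalars F : V ≃ₗ[F] V) : V →ₗ[F] V) = 1) := by
  classical
  obtain ⟨ζ, hζ⟩ : ∃ ζ : Kˣ, orderOf ζ = 4 :=
    IsCyclic.exists_orderOf_eq (by rw [Fintype.card_units]; omega)
  have hζ4 : ζ ^ 4 = 1 := hζ ▸ pow_orderOf_eq_one ζ
  have hζ2 : ζ ^ 2 ≠ 1 := pow_ne_one_of_lt_orderOf (by norm_num) (by omega)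
  let b := Module.finBasis K V
  let e₀ : Fin (Module.finrank K V) := ⟨0, by omega⟩
  let e₁ : Fin (Module.finrank K V) := ⟨1, by omega⟩
  refine ⟨⟨_, b.orderOf_diagonalAut_eq_four (c := Pi.mulSingle e₀ ζ) (i := e₁)
    (by rw [← Pi.mulSingle_pow, hζ4, Pi.mulSingle_one])
    (Pi.mulSingle_eq_of_ne (by simp [e₀, e₁]) _)
    (by rwa [Pi.mulSingle_eq_same])⟩, fun hm3 => ?_⟩
  let e₂ : Fin (Module.finrank K V) := ⟨2, by omega⟩
  let c : Fin (Module.finrank K V) → Kˣ := Pi.mulSingle e₀ ζ * Pi.mulSingle e₁ ζ⁻¹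
  have hc4 : c ^ 4 = 1 := by
    rw [mul_pow, ← Pi.mulSingle_pow, ← Pi.mulSingle_pow, inv_pow, hζ4, inv_one, Pi.mulSingle_one,
      Pi.mulSingle_one, one_mul]
  have hc₂ : c e₂ = 1 := by simp [c, e₀, e₁, e₂]
  have hc₀ : c e₀ ^ 2 ≠ 1 := by simpa [c, e₀, e₁, Pi.mulSingle_apply] using hζ2
  have hdet : ∏ i, c i = 1 := by
    simp only [c, Pi.mul_apply, Finset.prod_mul_distrib, Finset.prod_pi_mulSingle',
      Finset.mem_univ, if_true, mul_inv_cancel]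
  exact ⟨_, b.orderOf_diagonalAut_eq_four hc4 hc₂ hc₀ |>.imp_right
    fun h => ⟨h, b.det_restrictScalars_diagonalAut hdet⟩⟩

/-- Let `K/F` be an extension of finite fields with `|K| = q^d ≡ 1 (mod 4)` and let `V` be a
`K`-vector space of dimension `m ≥ 2`, viewed also as an `F`-vector space (so that
`GL_m(q^d) ≤ GL_n(q)`, `n = md`). Then there is a `K`-linear automorphism `y` of `V` of
order 4 whose image in `PGL_n(q)` (the quotient of the group of `F`-linear automorphisms of
`V` by its centre, i.e. the scalars) also has order 4; and if moreover `m ≥ 3`, such a `y`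
can be chosen with `F`-determinant 1, i.e. in `SL_n(q)`. -/
theorem stmt7 (F K : Type*) [Field F] [Fintype F] [Field K] [Fintype K] [Algebra F K]
    (V : Type*) [AddCommGroup V] [Module F V] [Module K V] [IsScalarTower F K V]
    [FiniteDimensional K V]
    (hm : 2 ≤ Module.finrank K V) (hq : Fintype.card K % 4 = 1) :
    (∃ y : V ≃ₗ[K] V, orderOf y = 4 ∧
      orderOf (QuotientGroup.mk (y.restrictScalars F) :
        (V ≃ₗ[F] V) ⧸ Subgroup.center (V ≃ₗ[F] V)) = 4) ∧
    (3 ≤ Module.finrank K V → ∃ y : V ≃ₗ[K] V, orderOf y = 4 ∧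
      orderOf (QuotientGroup.mk (y.restrictScalars F) :
        (V ≃ₗ[F] V) ⧸ Subgroup.center (V ≃ₗ[F] V)) = 4 ∧
      LinearMap.det ((y.restrictScalars F : V ≃ₗ[F] V) : V →ₗ[F] V) = 1) :=
  stmt7_general F K V hm hq
end

section
/- Let q be an odd prime power and q ≡ ±3 (mod 8). Then the Sylow 2-subgroups of PSL_2(q) are Klein four-groups (elementary abelian of order 4). -/
/-!
`|SL₂(F)| = q(q² - 1)` and its centre `{±1}` has order 2, so `|PSL₂(F)| = q(q² - 1)/2`,
whose 2-part is 4 when `q ≡ ±3 (mod 8)`. Every element of a Sylow 2-subgroup thus satisfies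
`x⁴ = 1`; lift it to `g ∈ SL₂(F)`, so `g⁴ = ±1`. If `g⁴ = -1`, Cayley–Hamilton for `h = g²`
turns `h² = -1` into `tr h = 0`, i.e. `(tr g)² = 2`, impossible as 2 is not a square in `F`.
If `g⁴ = 1`, then `g²` squares to 1 in `SL₂(F)`, hence is scalar (Cayley–Hamilton again, since
`2 ≠ 0`), so `x² = 1`.
-/

open Matrix Subgroup
open scoped MatrixGroups

theorem Nat.exists_mul_sq_sub_one_eq_eight_mul_odd {q : ℕ} (hq : q % 8 = 3 ∨ q % 8 = 5) :
    ∃ m, Odd m ∧ q * (q ^ 2 - 1) = 8 * m := by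
  obtain ⟨k, rfl | rfl⟩ : ∃ k, q = 8 * k + 3 ∨ q = 8 * k + 5 := ⟨q / 8, by omega⟩
  · refine ⟨(8 * k + 3) * (8 * k ^ 2 + 6 * k + 1), ?_, ?_⟩
    · exact Odd.mul ⟨4 * k + 1, by ring⟩ ⟨4 * k ^ 2 + 3 * k, by ring⟩
    · rw [Nat.sub_eq_of_eq_add (by ring : (8 * k + 3) ^ 2 = 8 * (8 * k ^ 2 + 6 * k + 1) + 1)]
      ring
  · refine ⟨(8 * k + 5) * (8 * k ^ 2 + 10 * k + 3), ?_, ?_⟩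
    · exact Odd.mul ⟨4 * k + 2, by ring⟩ ⟨4 * k ^ 2 + 5 * k + 1, by ring⟩
    · rw [Nat.sub_eq_of_eq_add (by ring : (8 * k + 5) ^ 2 = 8 * (8 * k ^ 2 + 10 * k + 3) + 1)]
      ring

theorem Sylow.card_eq_pow_of_card_eq_pow_mul {G : Type*} [Group G] [Finite G] {p n m : ℕ}
    [Fact p.Prime] (P : Sylow p G) (hG : Nat.card G = p ^ n * m) (hm : ¬p ∣ m) :
    Nat.card P = p ^ n := by
  have hm0 : m ≠ 0 := by rintro rfl; exact hm (dvd_zero p)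
  have hp : p.Prime := Fact.out
  rw [P.card_eq_multiplicity, hG, Nat.factorization_mul (pow_ne_zero n hp.ne_zero) hm0,
    Finsupp.add_apply, hp.factorization_pow, Finsupp.single_eq_same,
    Nat.factorization_eq_zero_of_not_dvd hm, add_zero]

namespace Matrix

variable {R : Type*} [CommRing R]

theorem sq_fin_two_eq_trace_smul_sub_det_smul_one (M : Matrix (Fin 2) (Fin 2) R) :
    M ^ 2 = M.trace • M - M.det • 1 := by
  nontriviality R
  have h := M.aeval_self_charpoly
  rw [charpoly_fin_two] at h
  simp only [map_add, map_sub, map_pow, map_mul, Polynomial.aeval_X, Polynomial.aeval_C,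
    Algebra.algebraMap_eq_smul_one, smul_mul_assoc, one_mul] at h
  linear_combination (norm := module) h

theorem trace_sq_fin_two (M : Matrix (Fin 2) (Fin 2) R) :
    (M ^ 2).trace = M.trace ^ 2 - 2 * M.det := by
  rw [sq_fin_two_eq_trace_smul_sub_det_smul_one, trace_sub, trace_smul, trace_smul, trace_one,
    Fintype.card_fin, smul_eq_mul, smul_eq_mul, sq, Nat.cast_ofNat, mul_comm M.det]

namespace SpecialLinearGroup

theorem coe_sq_eq_trace_smul_sub_one (g : SL(2, R)) :
    (g : Matrix (Fin 2) (Fin 2) R) ^ 2 = (g : Matrix (Fin 2) (Fin 2) R).trace • g - 1 := by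
  rw [sq_fin_two_eq_trace_smul_sub_det_smul_one, g.det_coe, one_smul]

theorem mem_center_iff_eq_one_or_eq_neg_one [NoZeroDivisors R] {g : SL(2, R)} :
    g ∈ center SL(2, R) ↔ g = 1 ∨ g = -1 := by
  rw [mem_center_iff, Fintype.card_fin]
  constructor
  · rintro ⟨r, hr, hrg⟩
    rcases sq_eq_one_iff.mp hr with rfl | rfl
    · exact .inl (Subtype.ext (by simpa only [map_one, coe_one] using hrg.symm))
    · exact .inr <| Subtype.ext <| by
        simpa only [map_neg, map_one, coe_neg, coe_one] using hrg.symm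
  · rintro (rfl | rfl)
    · exact ⟨1, one_pow 2, by simp⟩
    · exact ⟨-1, by norm_num, by simp only [map_neg, map_one, coe_neg, coe_one]⟩

variable {F : Type*} [Field F]

theorem mem_center_of_sq_eq_one (h2 : (2 : F) ≠ 0) {g : SL(2, F)} (hg : g ^ 2 = 1) :
    g ∈ center SL(2, F) := by
  set t := (g : Matrix (Fin 2) (Fin 2) F).trace
  have htg : t • (g : Matrix (Fin 2) (Fin 2) F) = (2 : F) • 1 := by
    have h := g.coe_sq_eq_trace_smul_sub_one
    rw [← coe_pow, hg, coe_one] at h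
    linear_combination (norm := module) -h
  have ht : t ≠ 0 := by
    rintro ht
    rw [ht, zero_smul, eq_comm, smul_eq_zero] at htg
    exact htg.elim h2 one_ne_zero
  have hg_scalar : (g : Matrix (Fin 2) (Fin 2) F) = (t⁻¹ * 2) • 1 := by
    rw [mul_smul, ← htg, inv_smul_smul₀ ht]
  refine mem_center_iff.mpr ⟨t⁻¹ * 2, ?_, by rw [hg_scalar, smul_one_eq_diagonal]; rfl⟩
  simpa [hg_scalar, det_smul] using g.det_coe

theorem isSquare_two_of_pow_four_eq_neg_one {g : SL(2, F)} (hg : g ^ 4 = -1) :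
    IsSquare (2 : F) := by
  have hsq : ((g ^ 2 : SL(2, F)) : Matrix (Fin 2) (Fin 2) F) ^ 2 = -1 := by
    rw [← coe_pow, ← pow_mul, hg, coe_neg, coe_one]
  have htr : ((g ^ 2 : SL(2, F)) : Matrix (Fin 2) (Fin 2) F).trace = 0 := by
    have h := (g ^ 2).coe_sq_eq_trace_smul_sub_one
    rw [hsq, eq_sub_iff_add_eq, neg_add_cancel, eq_comm, smul_eq_zero] at h
    exact h.resolve_right fun h0 => (g ^ 2).row_ne_zero 0 (by rw [h0]; rfl)
  rw [coe_pow, trace_sq_fin_two, g.det_coe, mul_one, sub_eq_zero] at htr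
  exact ⟨_, htr.symm.trans (sq _)⟩

theorem card_mul_card_units {n : Type*} [Fintype n] [DecidableEq n] [Nonempty n] :
    Nat.card (SpecialLinearGroup n R) * Nat.card Rˣ = Nat.card (GL n R) := by
  have hker : (toGL : SpecialLinearGroup n R →* GL n R).range = GeneralLinearGroup.det.ker := by
    ext g
    refine ⟨?_, fun hg => ⟨⟨g, congrArg Units.val (MonoidHom.mem_ker.mp hg)⟩, Units.ext rfl⟩⟩
    rintro ⟨g, rfl⟩
    exact MonoidHom.mem_ker.mpr (Units.ext g.det_coe)
  rw [← card_mul_index GeneralLinearGroup.det.ker, index_ker,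
    MonoidHom.range_eq_top_of_surjective _ GeneralLinearGroup.det_surjective, card_top, ← hker,
    ← Nat.card_congr (MonoidHom.ofInjective toGL_injective).toEquiv]

theorem card_fin_two [Fintype F] :
    Nat.card SL(2, F) = Fintype.card F * (Fintype.card F ^ 2 - 1) := by
  have h := card_mul_card_units (n := Fin 2) (R := F)
  rw [card_GL_field, Fin.prod_univ_two, Nat.card_units, Nat.card_eq_fintype_card (α := F)] at h
  have hq : 0 < Fintype.card F - 1 := Nat.sub_pos_of_lt Fintype.one_lt_card
  refine Nat.eq_of_mul_eq_mul_right hq (h.trans ?_)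
  simp only [Fin.val_zero, Fin.val_one, pow_zero, pow_one, sq, ← Nat.mul_sub_one]
  ring

theorem card_center_fin_two [IsDomain R] (hR : ringChar R ≠ 2) :
    Nat.card (center SL(2, R)) = 2 := by
  rw [Nat.card_congr (center_equiv_rootsOfUnity' 0).toEquiv, Fintype.card_fin,
    (IsPrimitiveRoot.neg_one (ringChar R) hR).card_rootsOfUnity]

theorem card_quotient_center_fin_two_mul_two [Fintype F] (hF : ringChar F ≠ 2) :
    Nat.card (SL(2, F) ⧸ center SL(2, F)) * 2 = Fintype.card F * (Fintype.card F ^ 2 - 1) := by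
  have h := card_eq_card_quotient_mul_card_subgroup (center SL(2, F))
  rwa [card_center_fin_two hF, card_fin_two, eq_comm] at h

theorem sq_eq_one_of_pow_four_eq_one (hF : ¬IsSquare (2 : F)) {x : SL(2, F) ⧸ center SL(2, F)}
    (hx : x ^ 4 = 1) : x ^ 2 = 1 := by
  obtain ⟨g, rfl⟩ := QuotientGroup.mk_surjective x
  rw [← QuotientGroup.mk_pow, QuotientGroup.eq_one_iff] at hx ⊢
  rcases mem_center_iff_eq_one_or_eq_neg_one.mp hx with hg | hg
  · exact mem_center_of_sq_eq_one (fun h2 => hF (h2 ▸ IsSquare.zero)) (by rw [← pow_mul, hg])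
  · exact absurd (isSquare_two_of_pow_four_eq_neg_one hg) hF

end SpecialLinearGroup

end Matrix

open Matrix.SpecialLinearGroup in
/-- Let `q` be an odd prime power with `q ≡ ±3 (mod 8)`. Then the Sylow 2-subgroups of
`PSL_2(q) = SL_2(q)/{±1}` are Klein four-groups (elementary abelian of order 4). -/
theorem stmt10 (F : Type*) [Field F] [Fintype F]
    (h : Fintype.card F % 8 = 3 ∨ Fintype.card F % 8 = 5)
    (S : Sylow 2 (Matrix.SpecialLinearGroup (Fin 2) F ⧸
      Subgroup.center (Matrix.SpecialLinearGroup (Fin 2) F))) :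
    Nat.card (S : Subgroup (Matrix.SpecialLinearGroup (Fin 2) F ⧸
      Subgroup.center (Matrix.SpecialLinearGroup (Fin 2) F))) = 4 ∧
    ∀ x : (S : Subgroup (Matrix.SpecialLinearGroup (Fin 2) F ⧸
      Subgroup.center (Matrix.SpecialLinearGroup (Fin 2) F))), x ^ 2 = 1 := by
  have hchar : ringChar F ≠ 2 := fun h2 => by
    have := FiniteField.even_card_of_char_two h2
    omega
  have hsq : ¬IsSquare (2 : F) := by
    rw [FiniteField.isSquare_two_iff]
    omega
  obtain ⟨m, hm, hq⟩ := Nat.exists_mul_sq_sub_one_eq_eight_mul_odd h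
  have hcard : Nat.card (SL(2, F) ⧸ center SL(2, F)) = 2 ^ 2 * m := by
    have := card_quotient_center_fin_two_mul_two hchar
    omega
  have hS : Nat.card S = 4 := S.card_eq_pow_of_card_eq_pow_mul hcard hm.not_two_dvd_nat
  refine ⟨hS, fun x => Subtype.ext (sq_eq_one_of_pow_four_eq_one hsq ?_)⟩
  have hx : x ^ 4 = 1 := hS ▸ pow_card_eq_one'
  simpa using congrArg Subtype.val hx
end

section
/- Let α be a partition of l+1 and for a prime power q let χ^α denote the unipotent character of GL_{l+1}(q) (type A_l(q)) labelled by α, whose degree satisfies the hook-length formula: the q'-part of χ^α(1) equals (q−1)|A_l(q)|_{r'} / ∏_h (q^h − 1), where h runs over the hook lengths of α. If l+1 is not a triangular number, then α has at least one hook of even length. -/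
/-!
If every hook of `μ` is odd, consecutive nonempty rows differ in length by exactly one: two
equal rows `i`, `i + 1` give cells at the end of row `i` and row `i + 1` with consecutive hook
lengths, and a drop by two or more gives a hook of length `2` at the second-to-last cell of row
`i`. So `μ` is the staircase `(m, m - 1, …, 1)` and has `m (m + 1) / 2` cells.
-/

/-- The hook length of the cell `(i, j)` of a Young diagram `μ`:
arm length plus leg length plus one. -/
def YoungDiagram.hookLength (μ : YoungDiagram) (i j : ℕ) : ℕ :=
  μ.rowLen i + μ.colLen j - i - j - 1

theorem Finset.sum_range_tsub_eq (m : ℕ) : ∑ i ∈ range m, (m - i) = m * (m + 1) / 2 := by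
  have hreflect : ∑ i ∈ range m, (m - i) = ∑ i ∈ range m, (i + 1) := by
    rw [← sum_range_reflect (· + 1) m]
    exact sum_congr rfl fun i hi => by have := mem_range.1 hi; omega
  have hgauss := sum_range_id (m + 1)
  rw [sum_range_succ', Nat.add_sub_cancel, mul_comm] at hgauss
  rw [hreflect, ← hgauss, add_zero]

namespace YoungDiagram

variable (μ : YoungDiagram)

theorem rowLen_pos_iff_lt_colLen_zero {i : ℕ} : 0 < μ.rowLen i ↔ i < μ.colLen 0 := by
  rw [← mem_iff_lt_rowLen, mem_iff_lt_colLen]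

theorem card_cells_eq_sum_rowLen :
    μ.cells.card = ∑ i ∈ Finset.range (μ.colLen 0), μ.rowLen i := by
  have hmaps : Set.MapsTo Prod.fst (μ.cells : Set (ℕ × ℕ)) (Finset.range (μ.colLen 0)) :=
    fun c hc => by
      rw [Finset.mem_coe, Finset.mem_range, ← mem_iff_lt_colLen]
      exact μ.up_left_mem le_rfl (Nat.zero_le _) hc
  rw [Finset.card_eq_sum_card_fiberwise hmaps]
  exact Finset.sum_congr rfl fun i _ => by rw [rowLen_eq_card, row]

theorem hookLength_eq_hookLength_succ_add_one {i j : ℕ}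
    (hrow : μ.rowLen (i + 1) = μ.rowLen i) (hj : (i + 1, j) ∈ μ) :
    μ.hookLength i j = μ.hookLength (i + 1) j + 1 := by
  have hj' := mem_iff_lt_rowLen.1 hj
  rw [mem_iff_lt_colLen] at hj
  unfold hookLength
  omega

theorem hookLength_rowLen_sub_two {i : ℕ} (hdrop : μ.rowLen (i + 1) + 2 ≤ μ.rowLen i) :
    μ.hookLength i (μ.rowLen i - 2) = 2 := by
  have hin : (i, μ.rowLen i - 2) ∈ μ := mem_iff_lt_rowLen.2 (by omega)
  have hout : (i + 1, μ.rowLen i - 2) ∉ μ := by rw [mem_iff_lt_rowLen]; omega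
  rw [mem_iff_lt_colLen] at hin hout
  unfold hookLength
  omega

variable {μ}

theorem rowLen_eq_rowLen_succ_add_one (hodd : ∀ c ∈ μ.cells, Odd (μ.hookLength c.1 c.2))
    {i : ℕ} (hi : 0 < μ.rowLen i) : μ.rowLen i = μ.rowLen (i + 1) + 1 := by
  have hanti := μ.rowLen_anti i (i + 1) (Nat.le_succ i)
  by_contra hne
  rcases Nat.lt_or_ge (μ.rowLen i) (μ.rowLen (i + 1) + 2) with hlt | hdrop
  · have hrow : μ.rowLen (i + 1) = μ.rowLen i := by omega
    have hj : (i + 1, μ.rowLen i - 1) ∈ μ := mem_iff_lt_rowLen.2 (by omega)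
    have hj' : (i, μ.rowLen i - 1) ∈ μ := μ.up_left_mem (Nat.le_succ i) le_rfl hj
    have h := hodd _ ((mem_cells _).2 hj')
    rw [hookLength_eq_hookLength_succ_add_one μ hrow hj, Nat.odd_add_one] at h
    exact h (hodd _ ((mem_cells _).2 hj))
  · have hin : (i, μ.rowLen i - 2) ∈ μ := mem_iff_lt_rowLen.2 (by omega)
    have h := hodd _ ((mem_cells _).2 hin)
    rw [hookLength_rowLen_sub_two μ hdrop] at h
    exact Nat.not_odd_iff_even.2 even_two h

theorem rowLen_eq_colLen_zero_sub (hodd : ∀ c ∈ μ.cells, Odd (μ.hookLength c.1 c.2)) (i : ℕ) :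
    μ.rowLen i = μ.colLen 0 - i := by
  have hzero : ∀ i, μ.colLen 0 ≤ i → μ.rowLen i = 0 := fun i hi =>
    Nat.eq_zero_of_not_pos ((rowLen_pos_iff_lt_colLen_zero μ).not.2 hi.not_gt)
  rcases le_total i (μ.colLen 0) with hle | hge
  · induction hle using Nat.decreasingInduction with
    | self => simp [hzero _ le_rfl]
    | of_succ k hk ih =>
      rw [rowLen_eq_rowLen_succ_add_one hodd ((rowLen_pos_iff_lt_colLen_zero μ).2 hk), ih]
      omega
  · rw [hzero i hge]
    omega

theorem card_cells_of_forall_odd_hookLength (hodd : ∀ c ∈ μ.cells, Odd (μ.hookLength c.1 c.2)) :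
    μ.cells.card = μ.colLen 0 * (μ.colLen 0 + 1) / 2 := by
  rw [card_cells_eq_sum_rowLen, ← Finset.sum_range_tsub_eq]
  exact Finset.sum_congr rfl fun i _ => rowLen_eq_colLen_zero_sub hodd i

end YoungDiagram

/-- If `n` is not a triangular number, then every partition of `n` (equivalently, every
Young diagram with `n` cells) has at least one hook of even length. -/
theorem stmt12 (n : ℕ) (hn : ¬ ∃ k : ℕ, n = k * (k + 1) / 2)
    (μ : YoungDiagram) (hμ : μ.cells.card = n) :
    ∃ c ∈ μ.cells, Even (μ.hookLength c.1 c.2) := by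
  by_contra! hnone
  have hodd : ∀ c ∈ μ.cells, Odd (μ.hookLength c.1 c.2) :=
    fun c hc => Nat.not_even_iff_odd.1 (hnone c hc)
  exact hn ⟨μ.colLen 0, hμ ▸ μ.card_cells_of_forall_odd_hookLength hodd⟩
end

section
/- Let q be an odd prime power, n = md, and view GL_1(q^n) ≤ GL_n(q) by restriction of scalars (m = 1 case). Then the intersection of a Sylow 2-subgroup T of GL_1(q^n) with SL_n(q) is cyclic of order (q^n − 1)_+ / (q − 1)_+, where n_+ denotes the 2-part. -/
/-!
The norm `Kˣ → Fˣ` is surjective, so its kernel has order `(q ^ n - 1) / (q - 1)`. Since `Kˣ` is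
abelian, `S` is normal, and the intersection of a normal Sylow `p`-subgroup with any subgroup `H`
is a Sylow `p`-subgroup of `H`; hence `|S ⊓ ker| = (|ker|)₊ = (q ^ n - 1)₊ / (q - 1)₊`. It is
cyclic as a subgroup of the cyclic group `Kˣ`.
-/

theorem Sylow.card_inf_of_normal {G : Type*} [Group G] [Finite G] {p : ℕ} [Fact p.Prime]
    (S : Sylow p G) [(S : Subgroup G).Normal] (H : Subgroup G) :
    Nat.card ((S : Subgroup G) ⊓ H : Subgroup G) = p ^ (Nat.card H).factorization p := by
  have hP : IsPGroup p ((S : Subgroup G).subgroupOf H) := S.isPGroup'.comap_subtype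
  have hindex : ¬ p ∣ ((S : Subgroup G).subgroupOf H).index :=
    fun h ↦ S.not_dvd_index (h.trans ((S : Subgroup G).relIndex_dvd_index_of_normal H))
  rw [← (hP.toSylow hindex).card_eq_multiplicity, IsPGroup.toSylow_coe,
    ← Subgroup.inf_subgroupOf_right]
  exact Nat.card_congr (Subgroup.subgroupOfEquivOfLe inf_le_right).toEquiv.symm

theorem FiniteField.card_ker_unitsMap_norm (K L : Type*) [Field K] [Field L] [Algebra K L]
    [Finite L] :
    Nat.card (Units.map (Algebra.norm K : L →* K)).ker = (Nat.card L - 1) / (Nat.card K - 1) := by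
  have := Finite.of_injective _ (algebraMap K L).injective
  rw [← Nat.card_units L, ← Nat.card_units K,
    ← Subgroup.card_mul_index (Units.map (Algebra.norm K : L →* K)).ker, Subgroup.index_ker,
    MonoidHom.range_eq_top.mpr (FiniteField.unitsMap_norm_surjective K L), Subgroup.card_top,
    Nat.mul_div_cancel _ Nat.card_pos]

theorem pow_padicValNat_div_of_dvd {p a b : ℕ} [Fact p.Prime] (hba : b ∣ a) (ha : a ≠ 0) :
    p ^ padicValNat p (a / b) = p ^ padicValNat p a / p ^ padicValNat p b := by
  obtain ⟨c, rfl⟩ := hba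
  obtain ⟨hb, hc⟩ := mul_ne_zero_iff.mp ha
  rw [Nat.mul_div_cancel_left _ (Nat.pos_of_ne_zero hb), padicValNat.mul hb hc, pow_add,
    Nat.mul_div_cancel_left _ (pow_pos (Fact.out : p.Prime).pos _)]

/-- View `GL_1(q^n)` inside `GL_n(q)` by restriction of scalars: `K/F` is an extension of
finite fields with `|F| = q` and `[K : F] = n`, so `Kˣ = GL_1(q^n)` and the determinant on
`GL_n(q)` restricts to the norm `Algebra.norm F : Kˣ → Fˣ`. The intersection of a Sylow
2-subgroup `S` of `Kˣ` with `SL_n(q)` (the kernel of the norm on units) is cyclic of order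
`(q^n - 1)₊ / (q - 1)₊`, where `m₊` denotes the 2-part of `m`. -/
theorem stmt16 (F K : Type*) [Field F] [Fintype F] [Field K] [Fintype K] [Algebra F K]
    (q n : ℕ) (hq : Fintype.card F = q) (hn : Module.finrank F K = n)
    (S : Sylow 2 Kˣ) :
    IsCyclic ((S : Subgroup Kˣ) ⊓ (Units.map (Algebra.norm F : K →* F)).ker : Subgroup Kˣ) ∧
    Nat.card ((S : Subgroup Kˣ) ⊓ (Units.map (Algebra.norm F : K →* F)).ker : Subgroup Kˣ) =
      2 ^ padicValNat 2 (q ^ n - 1) / 2 ^ padicValNat 2 (q - 1) := by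
  subst hq hn
  have hcard : Fintype.card K = Fintype.card F ^ Module.finrank F K := Module.card_eq_pow_finrank
  have hdvd : Fintype.card F - 1 ∣ Fintype.card K - 1 := by
    simpa only [hcard, one_pow] using Nat.sub_dvd_pow_sub_pow _ 1 _
  refine ⟨inferInstance, ?_⟩
  rw [Sylow.card_inf_of_normal, FiniteField.card_ker_unitsMap_norm,
    Nat.factorization_def _ Nat.prime_two, Nat.card_eq_fintype_card, Nat.card_eq_fintype_card,
    pow_padicValNat_div_of_dvd hdvd (Nat.sub_ne_zero_of_lt Fintype.one_lt_card), hcard]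
end

section
/- Let A be the alternating group A_n for some n ≥ 1. Then the Sylow 2-subgroups of A_n are never elementary abelian of order 2^r with r ≥ 3. -/
/-!
A Sylow 2-subgroup of a finite group contains a conjugate of every 2-element, so if it has
exponent 2 then every 2-element of the group squares to 1. For `n ≥ 6` the even permutation
`(0 1 2 3)(4 5)` has order 4, and for `n < 6` the order of `A_n` divides 60, so it has no
subgroup of order 8.
-/

open Equiv Equiv.Perm

theorem Sylow.exists_conj_mem_of_orderOf_eq_prime_pow {G : Type*} [Group G] {p : ℕ}
    [Fact p.Prime] [Finite (Sylow p G)] (S : Sylow p G) {g : G} {k : ℕ}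
    (hg : orderOf g = p ^ k) : ∃ c : G, c * g * c⁻¹ ∈ S := by
  have hpg : IsPGroup p (Subgroup.zpowers g) := IsPGroup.of_card (by rw [Nat.card_zpowers, hg])
  obtain ⟨Q, hQ⟩ := hpg.exists_le_sylow
  obtain ⟨c, rfl⟩ := MulAction.exists_smul_eq G Q S
  exact ⟨c, Subgroup.smul_mem_pointwise_smul g (MulAut.conj c) (Q : Subgroup G)
    (hQ (Subgroup.mem_zpowers g))⟩

theorem Sylow.sq_eq_one_of_orderOf_eq_two_pow {G : Type*} [Group G] [Finite (Sylow 2 G)]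
    (S : Sylow 2 G) (hS : ∀ x : S, x ^ 2 = 1) {g : G} {k : ℕ} (hg : orderOf g = 2 ^ k) :
    g ^ 2 = 1 := by
  obtain ⟨c, hc⟩ := S.exists_conj_mem_of_orderOf_eq_prime_pow hg
  have h := congrArg Subtype.val (hS ⟨_, hc⟩)
  rwa [Subgroup.coe_pow, conj_pow, Subgroup.coe_one, conj_eq_one_iff] at h

theorem exists_orderOf_eq_four_alternatingGroup {α : Type*} [Fintype α] [DecidableEq α]
    (h : 6 ≤ Fintype.card α) : ∃ g : alternatingGroup α, orderOf g = 4 := by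
  let σ : Perm (Fin 6) := swap 0 1 * swap 1 2 * swap 2 3 * swap 4 5
  have hσ : orderOf σ = 4 := orderOf_eq_prime_pow (p := 2) (n := 1) (by decide) (by decide)
  let e : Fin 6 ↪ α := (Fin.castLEEmb h).trans (Fintype.equivFin α).symm.toEmbedding
  have hsign : σ.viaEmbedding e ∈ alternatingGroup α := by
    rw [mem_alternatingGroup, Perm.viaEmbedding, sign_extendDomain]
    decide
  refine ⟨⟨σ.viaEmbedding e, hsign⟩, ?_⟩
  rw [Subgroup.orderOf_mk, ← viaEmbeddingHom_apply,
    orderOf_injective _ (viaEmbeddingHom_injective e), hσ]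

theorem nat_card_alternatingGroup_dvd_sixty {α : Type*} [Fintype α] [DecidableEq α]
    (h : Fintype.card α < 6) : Nat.card (alternatingGroup α) ∣ 60 := by
  rcases subsingleton_or_nontrivial α with _ | _
  · rw [Nat.card_of_subsingleton (⟨1, one_mem _⟩ : alternatingGroup α)]
    exact one_dvd _
  · have h2 : 2 * Nat.card (alternatingGroup α) ∣ 2 * 60 := by
      rw [two_mul_nat_card_alternatingGroup, Nat.card_perm, Nat.card_eq_fintype_card]
      exact (Nat.factorial_dvd_factorial (by omega : Fintype.card α ≤ 5)).trans (by decide)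
    exact Nat.dvd_of_mul_dvd_mul_left two_pos h2

/-- No alternating group `A_n` has an elementary abelian Sylow 2-subgroup of order `2^r`
with `r ≥ 3`. -/
theorem stmt19 (n : ℕ) (S : Sylow 2 (alternatingGroup (Fin n))) (r : ℕ) (hr : 3 ≤ r) :
    ¬ (Nat.card (S : Subgroup (alternatingGroup (Fin n))) = 2 ^ r ∧
       ∀ x : (S : Subgroup (alternatingGroup (Fin n))), x ^ 2 = 1) := by
  rintro ⟨hcard, hexp⟩
  have h8 : 2 ^ 3 ∣ Nat.card (alternatingGroup (Fin n)) :=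
    (pow_dvd_pow 2 hr).trans (hcard ▸ Subgroup.card_subgroup_dvd_card _)
  have h6 : 6 ≤ Fintype.card (Fin n) := by
    by_contra! h
    exact absurd (h8.trans (nat_card_alternatingGroup_dvd_sixty h)) (by decide)
  obtain ⟨g, hg⟩ := exists_orderOf_eq_four_alternatingGroup h6
  have hg2 : g ^ 2 = 1 := S.sq_eq_one_of_orderOf_eq_two_pow hexp (k := 2) hg
  have h4 : 4 ∣ 2 := hg ▸ orderOf_dvd_of_pow_eq_one hg2
  exact absurd h4 (by decide)
end
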